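/- arXiv:math/0407259 — 3 statements merged into one kernel-verified Lean document; each statement's English description precedes it below -/
import Mathlib

section
/- Let f be a ternary cubic with real coefficients and suppose c ∈ ℝ satisfies (1/2)·Σ_{p,q=1}^{3} B_{pq}·∂²B_{ij}/∂x_p∂x_q = c·x_i·x_j for all i, j. Let x ∈ ℝ³ be a point at which H(x) ≠ 0, and set g_{ij} = −f_{ij}(x)/6, h = det(g_{ij}), let (g^{pq}) be the inverse matrix of (g_{ij}), and define R_{ijkl} = −(1/144)·Σ_{p,q=1}^{3} g^{pq}·(f_{jlp} f_{ikq} − f_{ilp} f_{jkq}). Then for all vectors λ = (λ₁,λ₂,λ₃) and μ = (μ₁,μ₂,μ₃) in ℝ³: −4h·Σ_{i,j,k,l=1}^{3} λ_i μ_j λ_k μ_l R_{ijkl} = 6^{−4}·c·(λ₁μ₂x₃ + λ₂μ₃x₁ + λ₃μ₁x₂ − λ₂μ₁x₃ − λ₃μ₂x₁ − λ₁μ₃x₂)². -/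
open MvPolynomial

noncomputable section

/-- The Hessian matrix of second partial derivatives of `f`. -/
def hessian (f : MvPolynomial (Fin 3) ℝ) : Matrix (Fin 3) (Fin 3) (MvPolynomial (Fin 3) ℝ) :=
  fun i j => pderiv i (pderiv j f)

/-- The adjugate (cofactor) matrix of the Hessian matrix of `f`. -/
def Bmat (f : MvPolynomial (Fin 3) ℝ) : Matrix (Fin 3) (Fin 3) (MvPolynomial (Fin 3) ℝ) :=
  (hessian f).adjugate

/-- The matrix `g_{ij} = -f_{ij}(x)/6` of the Hessian pseudo-Riemannian metric at `x`. -/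
def gmat (f : MvPolynomial (Fin 3) ℝ) (x : Fin 3 → ℝ) : Matrix (Fin 3) (Fin 3) ℝ :=
  fun i j => -(eval x (pderiv i (pderiv j f))) / 6

/-- The (constant) third partial derivatives `f_{ijk}` of `f`. -/
def thirdPartial (f : MvPolynomial (Fin 3) ℝ) (x : Fin 3 → ℝ) (i j k : Fin 3) : ℝ :=
  eval x (pderiv i (pderiv j (pderiv k f)))

/-- The components `R_{ijkl}` of the curvature tensor of the Hessian metric (Totaro's
formula): `R_{ijkl} = -(1/144) ∑_{p,q} g^{pq} (f_{jlp} f_{ikq} - f_{ilp} f_{jkq})`. -/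
def curv (f : MvPolynomial (Fin 3) ℝ) (x : Fin 3 → ℝ) (i j k l : Fin 3) : ℝ :=
  -(1/144) * ∑ p : Fin 3, ∑ q : Fin 3,
    (gmat f x)⁻¹ p q *
      (thirdPartial f x j l p * thirdPartial f x i k q -
        thirdPartial f x i l p * thirdPartial f x j k q)

/-!
The adjugate `B` of the Hessian `A` satisfies, for `w = λ × μ`, the Cauchy–Binet identity
`wᵀ B w = (λᵀAλ)(μᵀAμ) - (λᵀAμ)(μᵀAλ)`. Since `f` is cubic, the entries of `A` are linear forms,
so the second derivatives of the right-hand side are products of the constant third derivatives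
`f_{ijk}`. Contracting the hypothesis with `w_i w_j` therefore expresses
`∑ B_{pq} (f'''(μ,μ)_p f'''(λ,λ)_q - f'''(λ,μ)_p f'''(μ,λ)_q)` as `c (w ⬝ x)²`. Totaro's formula
gives the sectional curvature as the same contraction with `g⁻¹ = -6 B / H` in place of `B`,
and `det g = -H / 216` cancels the factor `1 / H`.
-/

open Matrix

namespace MvPolynomial

variable {σ R : Type*} [CommRing R]

theorem pderiv_pderiv_comm (i j : σ) (φ : MvPolynomial σ R) :
    pderiv i (pderiv j φ) = pderiv j (pderiv i φ) := by
  classical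
  have h : ⁅pderiv i, pderiv j⁆ = (0 : Derivation R (MvPolynomial σ R) (MvPolynomial σ R)) :=
    derivation_ext fun k => by
      rw [Derivation.commutator_apply, pderiv_X, pderiv_X]
      simp only [Pi.single_apply]
      split_ifs <;> simp
  simpa only [Derivation.commutator_apply, Derivation.zero_apply, sub_eq_zero] using
    congr($h φ)

theorem pderiv_eq_zero_of_isHomogeneous_zero {φ : MvPolynomial σ R} (h : φ.IsHomogeneous 0)
    (i : σ) : pderiv i φ = 0 := by
  rw [← totalDegree_zero_iff_isHomogeneous, totalDegree_eq_zero_iff_eq_C] at h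
  rw [h, pderiv_C]

theorem pderiv_pderiv_mul_of_eq_zero {φ ψ : MvPolynomial σ R} {i j : σ}
    (hφ : pderiv i (pderiv j φ) = 0) (hψ : pderiv i (pderiv j ψ) = 0) :
    pderiv i (pderiv j (φ * ψ)) = pderiv j φ * pderiv i ψ + pderiv i φ * pderiv j ψ := by
  simp only [pderiv_mul, map_add, hφ, hψ]
  ring

end MvPolynomial

theorem RingHom.comp_cross {R S : Type*} [CommRing R] [CommRing S] (φ : R →+* S)
    (u v : Fin 3 → R) : (φ ∘ u) ⨯₃ (φ ∘ v) = φ ∘ (u ⨯₃ v) := by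
  ext i
  fin_cases i <;> simp [cross_apply]

theorem Matrix.cross_dotProduct_adjugate_mulVec_cross {R : Type*} [CommRing R]
    (A : Matrix (Fin 3) (Fin 3) R) (u v : Fin 3 → R) :
    (u ⨯₃ v) ⬝ᵥ A.adjugate *ᵥ (u ⨯₃ v) =
      (u ⬝ᵥ A *ᵥ u) * (v ⬝ᵥ A *ᵥ v) - (u ⬝ᵥ A *ᵥ v) * (v ⬝ᵥ A *ᵥ u) := by
  simp only [adjugate_fin_three, cross_apply, dotProduct, mulVec, Fin.sum_univ_three, of_apply,
    cons_val', cons_val_zero, cons_val_one, cons_val_two, empty_val', cons_val_fin_one,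
    head_cons, tail_cons, head_fin_const]
  ring

section Cubic

variable (f : MvPolynomial (Fin 3) ℝ)

theorem hessian_isSymm : (hessian f).IsSymm :=
  Matrix.ext fun i j => pderiv_pderiv_comm j i f

theorem Bmat_isSymm : (Bmat f).IsSymm :=
  (hessian_isSymm f).adjugate

theorem thirdPartial_rotate (x : Fin 3 → ℝ) (a b p : Fin 3) :
    thirdPartial f x a b p = thirdPartial f x p a b := by
  rw [thirdPartial, thirdPartial, pderiv_pderiv_comm b p, pderiv_pderiv_comm a p]

def hessForm (u v : Fin 3 → ℝ) : MvPolynomial (Fin 3) ℝ :=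
  (C ∘ u) ⬝ᵥ hessian f *ᵥ (C ∘ v)

def thirdPartialContract (x u v : Fin 3 → ℝ) (p : Fin 3) : ℝ :=
  ∑ a, ∑ b, u a * v b * thirdPartial f x a b p

theorem eval_pderiv_hessForm (x u v : Fin 3 → ℝ) (p : Fin 3) :
    eval x (pderiv p (hessForm f u v)) = thirdPartialContract f x u v p := by
  simp only [thirdPartialContract, thirdPartial_rotate f x _ _ p]
  simp only [hessForm, dotProduct, mulVec, hessian, thirdPartial, map_sum, Finset.mul_sum,
    Function.comp_apply, mul_comm _ (C _), pderiv_C_mul, map_mul, eval_C, mul_assoc]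

theorem pderiv_pderiv_hessForm (hf : f.IsHomogeneous 3) (u v : Fin 3 → ℝ) (i j : Fin 3) :
    pderiv i (pderiv j (hessForm f u v)) = 0 := by
  have hzero : ∀ a b, pderiv i (pderiv j (hessian f a b)) = 0 := fun a b =>
    pderiv_eq_zero_of_isHomogeneous_zero (hf.pderiv.pderiv.pderiv) i
  simp [hessForm, dotProduct, mulVec, map_sum, mul_comm _ (C _), hzero]

theorem cross_dotProduct_Bmat_mulVec_cross (u v : Fin 3 → ℝ) :
    (C ∘ (u ⨯₃ v)) ⬝ᵥ Bmat f *ᵥ (C ∘ (u ⨯₃ v)) =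
      hessForm f u u * hessForm f v v - hessForm f u v * hessForm f v u := by
  rw [← RingHom.comp_cross, Bmat, cross_dotProduct_adjugate_mulVec_cross]
  rfl

theorem thirdPartialContract_Bmat_eq_mul_sq (hf : f.IsHomogeneous 3) (c : ℝ)
    (hc : ∀ i j : Fin 3,
      C (1/2 : ℝ) * ∑ p : Fin 3, ∑ q : Fin 3,
          Bmat f p q * pderiv p (pderiv q (Bmat f i j)) =
        C c * X i * X j)
    (x u v : Fin 3 → ℝ) :
    thirdPartialContract f x v v ⬝ᵥ (Bmat f).map (eval x) *ᵥ thirdPartialContract f x u u -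
        thirdPartialContract f x u v ⬝ᵥ (Bmat f).map (eval x) *ᵥ thirdPartialContract f x v u =
      c * ((u ⨯₃ v) ⬝ᵥ x) ^ 2 := by
  set T := thirdPartialContract f x
  have hBsymm : ∀ p q, eval x (Bmat f p q) = eval x (Bmat f q p) := fun p q => by
    rw [(Bmat_isSymm f).apply q p]
  have hc_eval : ∀ i j, (1/2) * ∑ p, ∑ q, eval x (Bmat f p q) *
      eval x (pderiv p (pderiv q (Bmat f i j))) = c * x i * x j := fun i j => by
    simpa only [map_mul, map_sum, eval_C, eval_X] using congr(eval x $(hc i j))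
  have hlinear : ∀ p q,
      eval x (pderiv p (pderiv q ((C ∘ (u ⨯₃ v)) ⬝ᵥ Bmat f *ᵥ (C ∘ (u ⨯₃ v))))) =
        ∑ i, ∑ j, (u ⨯₃ v) i * (u ⨯₃ v) j * eval x (pderiv p (pderiv q (Bmat f i j))) :=
    fun p q => by
    simp only [dotProduct, mulVec, Function.comp_apply, Finset.mul_sum, map_sum,
      mul_comm _ (C _), pderiv_C_mul, map_mul, eval_C, mul_assoc]
  have hleibniz : ∀ p q,
      eval x (pderiv p (pderiv q ((C ∘ (u ⨯₃ v)) ⬝ᵥ Bmat f *ᵥ (C ∘ (u ⨯₃ v))))) =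
        T u u q * T v v p + T u u p * T v v q - (T u v q * T v u p + T u v p * T v u q) :=
    fun p q => by
    rw [cross_dotProduct_Bmat_mulVec_cross, map_sub, map_sub,
      pderiv_pderiv_mul_of_eq_zero (pderiv_pderiv_hessForm f hf _ _ p q)
        (pderiv_pderiv_hessForm f hf _ _ p q),
      pderiv_pderiv_mul_of_eq_zero (pderiv_pderiv_hessForm f hf _ _ p q)
        (pderiv_pderiv_hessForm f hf _ _ p q)]
    simp only [map_sub, map_add, map_mul, eval_pderiv_hessForm, T]
  calc T v v ⬝ᵥ (Bmat f).map (eval x) *ᵥ T u u - T u v ⬝ᵥ (Bmat f).map (eval x) *ᵥ T v u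
      = (1/2) * ∑ p, ∑ q, eval x (Bmat f p q) *
          eval x (pderiv p (pderiv q ((C ∘ (u ⨯₃ v)) ⬝ᵥ Bmat f *ᵥ (C ∘ (u ⨯₃ v))))) := by
        simp only [hleibniz]
        simp only [dotProduct, mulVec, map_apply, Fin.sum_univ_three]
        rw [hBsymm 1 0, hBsymm 2 0, hBsymm 2 1]
        ring
    _ = ∑ i, ∑ j, (u ⨯₃ v) i * (u ⨯₃ v) j * ((1/2) * ∑ p, ∑ q, eval x (Bmat f p q) *
          eval x (pderiv p (pderiv q (Bmat f i j)))) := by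
        simp only [hlinear, Fin.sum_univ_three]
        ring
    _ = c * ((u ⨯₃ v) ⬝ᵥ x) ^ 2 := by
        simp only [hc_eval]
        simp only [dotProduct, Fin.sum_univ_three]
        ring

theorem gmat_eq_smul (x : Fin 3 → ℝ) : gmat f x = (-6 : ℝ)⁻¹ • (hessian f).map (eval x) := by
  ext i j
  simp only [gmat, hessian, Matrix.smul_apply, map_apply, smul_eq_mul]
  ring

theorem det_gmat (x : Fin 3 → ℝ) : (gmat f x).det = -eval x (hessian f).det / 216 := by
  rw [gmat_eq_smul, det_smul, ← RingHom.mapMatrix_apply, ← RingHom.map_det]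
  norm_num
  ring

-- Both sides vanish when the Hessian determinant does, by the junk value of `⁻¹`.
theorem inv_gmat (x : Fin 3 → ℝ) :
    (gmat f x)⁻¹ = (-6 / eval x (hessian f).det) • (Bmat f).map (eval x) := by
  rw [inv_def, Ring.inverse_eq_inv, det_gmat, gmat_eq_smul, adjugate_smul,
    ← RingHom.mapMatrix_apply, ← RingHom.map_adjugate, smul_smul, Bmat, RingHom.mapMatrix_apply]
  congr 1
  norm_num
  ring

theorem sum_mul_curv_eq (x lam mu : Fin 3 → ℝ) :
    ∑ i, ∑ j, ∑ k, ∑ l, lam i * mu j * lam k * mu l * curv f x i j k l =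
      -(1/144) *
        (thirdPartialContract f x mu mu ⬝ᵥ (gmat f x)⁻¹ *ᵥ thirdPartialContract f x lam lam -
          thirdPartialContract f x lam mu ⬝ᵥ (gmat f x)⁻¹ *ᵥ thirdPartialContract f x mu lam) := by
  simp only [curv, thirdPartialContract, dotProduct, mulVec, Fin.sum_univ_three]
  ring

end Cubic

/-- If `(1/2) ∑_{p,q} B_{pq} ∂²B_{ij}/∂x_p∂x_q = c x_i x_j` for all `i, j`, and `x` is a
point where the Hessian determinant does not vanish, then for all vectors `λ, μ ∈ ℝ³`,
`-4h R(ξ,η,ξ,η) = 6⁻⁴ c (λ₁μ₂x₃ + λ₂μ₃x₁ + λ₃μ₁x₂ - λ₂μ₁x₃ - λ₃μ₂x₁ - λ₁μ₃x₂)²`. -/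
theorem stmt4 (f : MvPolynomial (Fin 3) ℝ) (hf : f.IsHomogeneous 3) (c : ℝ)
    (hc : ∀ i j : Fin 3,
      C (1/2 : ℝ) * ∑ p : Fin 3, ∑ q : Fin 3,
          Bmat f p q * pderiv p (pderiv q (Bmat f i j)) =
        C c * X i * X j)
    (x : Fin 3 → ℝ) (hx : eval x (hessian f).det ≠ 0)
    (lam mu : Fin 3 → ℝ) :
    -4 * (gmat f x).det *
        (∑ i : Fin 3, ∑ j : Fin 3, ∑ k : Fin 3, ∑ l : Fin 3,
          lam i * mu j * lam k * mu l * curv f x i j k l) =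
      ((6 : ℝ) ^ 4)⁻¹ * c *
        (lam 0 * mu 1 * x 2 + lam 1 * mu 2 * x 0 + lam 2 * mu 0 * x 1 -
          lam 1 * mu 0 * x 2 - lam 2 * mu 1 * x 0 - lam 0 * mu 2 * x 1) ^ 2 := by
  have htriple : (lam ⨯₃ mu) ⬝ᵥ x = lam 0 * mu 1 * x 2 + lam 1 * mu 2 * x 0 +
      lam 2 * mu 0 * x 1 - lam 1 * mu 0 * x 2 - lam 2 * mu 1 * x 0 - lam 0 * mu 2 * x 1 := by
    simp only [dotProduct, cross_apply, Fin.sum_univ_three, cons_val_zero, cons_val_one, cons_val]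
    ring
  rw [sum_mul_curv_eq, inv_gmat, det_gmat]
  simp only [smul_mulVec, dotProduct_smul, smul_eq_mul]
  rw [← mul_sub, thirdPartialContract_Bmat_eq_mul_sq f hf c hc x lam mu, htriple]
  field_simp
  ring
end
end

section
/- For all natural numbers u, v, w: Σ_{k=0}^{2v+1} C(2v+1, k)·C(2w, w+v−k)·( C(2u, u+v−k−1) − C(2u, u+v−k) ) ≤ 0, where the inner indices are interpreted as integers. -/
/-- The binomial coefficient `C(n, m)` with integer lower index, with the convention that
`C(n, m) = 0` whenever `m < 0` or `m > n`. -/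
def C (n : ℕ) (m : ℤ) : ℤ :=
  if 0 ≤ m then (n.choose m.toNat : ℤ) else 0

lemma C_nonneg (n : ℕ) (m : ℤ) : 0 ≤ C n m := by
  unfold C; split <;> positivity

lemma C_symm (n : ℕ) (m : ℤ) : C n m = C n (n - m) := by
  unfold C
  by_cases h0 : 0 ≤ m
  · by_cases h1 : m ≤ (n : ℤ)
    · rw [if_pos h0, if_pos (by omega)]
      have ht : ((n : ℤ) - m).toNat = n - m.toNat := by omega
      rw [ht]
      norm_cast
      exact (Nat.choose_symm (by omega)).symm
    · rw [if_pos h0, if_neg (by omega)]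
      have : n < m.toNat := by omega
      rw [Nat.choose_eq_zero_of_lt this]; norm_num
  · rw [if_neg h0, if_pos (by omega)]
    have : n < ((n : ℤ) - m).toNat := by omega
    rw [Nat.choose_eq_zero_of_lt this]; norm_num

lemma choose_mono_half (n : ℕ) : ∀ b : ℕ, 2 * b ≤ n → ∀ a : ℕ, a ≤ b → n.choose a ≤ n.choose b := by
  intro b
  induction b with
  | zero => intro _ a ha; interval_cases a; exact le_refl _
  | succ b ih =>
    intro hb a ha
    rcases Nat.eq_or_lt_of_le ha with h | h
    · rw [h]
    · exact le_trans (ih (by omega) a (by omega))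
        (Nat.choose_le_succ_of_lt_half_left (by omega))

lemma C_mono (n : ℕ) (a b : ℤ) (hab : a ≤ b) (hb : 2 * b ≤ (n : ℤ)) : C n a ≤ C n b := by
  by_cases ha : 0 ≤ a
  · unfold C
    rw [if_pos ha, if_pos (by omega)]
    have h1 : a.toNat ≤ b.toNat := by omega
    have h2 : 2 * b.toNat ≤ n := by omega
    exact_mod_cast choose_mono_half n b.toNat h2 a.toNat h1
  · unfold C
    rw [if_neg ha]
    split
    · positivity
    · exact le_refl 0

lemma C_anti (n : ℕ) (a b : ℤ) (hab : a ≤ b) (h : (n : ℤ) ≤ a + b) : C n b ≤ C n a := by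
  rcases le_or_gt (2 * a) (n : ℤ) with hc | hc
  · rw [C_symm n b]
    exact C_mono n ((n : ℤ) - b) a (by omega) (by omega)
  · rw [C_symm n b, C_symm n a]
    exact C_mono n ((n : ℤ) - b) ((n : ℤ) - a) (by omega) (by omega)

def g (u v w : ℕ) (k : ℤ) : ℤ :=
  C (2 * v + 1) k * C (2 * w) ((w : ℤ) + v - k) *
    (C (2 * u) ((u : ℤ) + v - k - 1) - C (2 * u) ((u : ℤ) + v - k))

lemma key (u v w m : ℕ) : g u v w ((v : ℤ) - 1 - m) + g u v w ((v : ℤ) + m) ≤ 0 := by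
  unfold g
  have e1 : (w : ℤ) + v - ((v : ℤ) - 1 - m) = (w : ℤ) + 1 + m := by ring
  have e2 : (u : ℤ) + v - ((v : ℤ) - 1 - m) - 1 = (u : ℤ) + m := by ring
  have e3 : (u : ℤ) + v - ((v : ℤ) - 1 - m) = (u : ℤ) + 1 + m := by ring
  have e4 : (w : ℤ) + v - ((v : ℤ) + m) = (w : ℤ) - m := by ring
  have e5 : (u : ℤ) + v - ((v : ℤ) + m) - 1 = (u : ℤ) - 1 - m := by ring
  have e6 : (u : ℤ) + v - ((v : ℤ) + m) = (u : ℤ) - m := by ring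
  rw [e1, e2, e3, e4, e5, e6]
  have s1 : C (2 * v + 1) ((v : ℤ) - 1 - m) = C (2 * v + 1) ((v : ℤ) + 2 + m) := by
    rw [C_symm]; congr 1; push_cast; ring
  have s2 : C (2 * w) ((w : ℤ) + 1 + m) = C (2 * w) ((w : ℤ) - 1 - m) := by
    rw [C_symm]; congr 1; push_cast; ring
  have s3 : C (2 * u) ((u : ℤ) + m) = C (2 * u) ((u : ℤ) - m) := by
    rw [C_symm]; congr 1; push_cast; ring
  have s4 : C (2 * u) ((u : ℤ) + 1 + m) = C (2 * u) ((u : ℤ) - 1 - m) := by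
    rw [C_symm]; congr 1; push_cast; ring
  rw [s1, s2, s3, s4]
  have hA : C (2 * v + 1) ((v : ℤ) + 2 + m) ≤ C (2 * v + 1) ((v : ℤ) + m) :=
    C_anti _ ((v : ℤ) + m) _ (by linarith) (by push_cast; linarith)
  have hB : C (2 * w) ((w : ℤ) - 1 - m) ≤ C (2 * w) ((w : ℤ) - m) :=
    C_mono _ _ _ (by linarith) (by push_cast; linarith)
  have hD : C (2 * u) ((u : ℤ) - 1 - m) ≤ C (2 * u) ((u : ℤ) - m) :=
    C_mono _ _ _ (by linarith) (by push_cast; linarith)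
  have hprod : C (2 * v + 1) ((v : ℤ) + 2 + m) * C (2 * w) ((w : ℤ) - 1 - m) ≤
      C (2 * v + 1) ((v : ℤ) + m) * C (2 * w) ((w : ℤ) - m) :=
    mul_le_mul hA hB (C_nonneg _ _) (C_nonneg _ _)
  nlinarith [mul_nonneg (sub_nonneg.mpr hprod) (sub_nonneg.mpr hD)]

/-- `∑_{k=0}^{2v+1} C(2v+1,k) C(2w, w+v-k) (C(2u, u+v-k-1) - C(2u, u+v-k)) ≤ 0`. -/
theorem stmt11 (u v w : ℕ) :
    ∑ k ∈ Finset.range (2 * v + 2),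
        C (2 * v + 1) (k : ℤ) * C (2 * w) ((w : ℤ) + v - k) *
          (C (2 * u) ((u : ℤ) + v - k - 1) - C (2 * u) ((u : ℤ) + v - k)) ≤ 0 := by
  show ∑ k ∈ Finset.range (2 * v + 2), g u v w (k : ℤ) ≤ 0
  have h2 : ∑ j ∈ Finset.range (2 + (2 * v + 2)), g u v w ((j : ℤ) - 2) =
      ∑ k ∈ Finset.range (2 * v + 2), g u v w (k : ℤ) := by
    rw [Finset.sum_range_add]
    have hz : ∑ j ∈ Finset.range 2, g u v w ((j : ℤ) - 2) = 0 := by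
      norm_num [Finset.sum_range_succ, g, C]
    rw [hz, zero_add]
    refine Finset.sum_congr rfl fun j _ => ?_
    congr 1; push_cast; ring
  rw [← h2, show 2 + (2 * v + 2) = (v + 2) + (v + 2) from by ring, Finset.sum_range_add]
  have hrefl := Finset.sum_range_reflect (fun j => g u v w ((j : ℤ) - 2)) (v + 2)
  rw [← hrefl, ← Finset.sum_add_distrib]
  apply Finset.sum_nonpos
  intro m hm
  have hm' : m ≤ v + 1 := by simpa [Nat.lt_succ_iff] using Finset.mem_range.mp hm
  have hx : ((v + 2 - 1 - m : ℕ) : ℤ) - 2 = (v : ℤ) - 1 - m := by omega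
  have hy : ((v + 2 + m : ℕ) : ℤ) - 2 = (v : ℤ) + m := by push_cast; ring
  simp only [hx, hy]
  exact key u v w m
end

section
/- For every integer s ≥ 2, A₃(s) = A₆(s), where A₃(s) := Σ_{l=0}^{s−2} C(s,l)²·C(s,l+2) · ( Σ_{j=0}^{l} C(l,j)·( C(l,j+1)·C(l+2,j+2) − C(l,j)·C(l+2,j+1) ) · Σ_{i=0}^{s−l} C(s−l,i)·C(s−l−2,i−1)·( C(s−l,i+1) − C(s−l,i) ) ) and A₆(s) := Σ_{l=0}^{s−2} C(s,l+2)²·C(s,l) · ( Σ_{j=1}^{l+2} C(l+2,j)·( C(l,j−2)·C(l+2,j−1) − C(l,j−1)·C(l+2,j) ) · Σ_{i=0}^{s−l−2} C(s−l−2,i)·C(s−l,i+1)·( C(s−l−2,i−1) − C(s−l−2,i) ) ). -/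
/-- The quantity `A₃(s)`: the `(2,2)`-contribution to the coefficient of the monomial with
exponent matrix `(d-1)·[[3,0,1],[1,3,0],[0,1,3]]` in the `S`-invariant, with `s = d-1`. -/
def A3 (s : ℕ) : ℤ :=
  ∑ l ∈ Finset.range (s - 1),
    C s l ^ 2 * C s (l + 2) *
      ((∑ j ∈ Finset.range (l + 1),
          C l j * (C l (j + 1) * C (l + 2) (j + 2) - C l j * C (l + 2) (j + 1))) *
        (∑ i ∈ Finset.range (s - l + 1),
          C (s - l) i * C (s - l - 2) ((i : ℤ) - 1) * (C (s - l) (i + 1) - C (s - l) i)))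

/-- The quantity `A₆(s)`: the `(1,1)`-contribution to the coefficient of the monomial with
exponent matrix `(d-1)·[[3,0,1],[1,3,0],[0,1,3]]` in the `S`-invariant, with `s = d-1`. -/
def A6 (s : ℕ) : ℤ :=
  ∑ l ∈ Finset.range (s - 1),
    C s (l + 2) ^ 2 * C s l *
      ((∑ j ∈ Finset.Icc 1 (l + 2),
          C (l + 2) j * (C l ((j : ℤ) - 2) * C (l + 2) ((j : ℤ) - 1) -
            C l ((j : ℤ) - 1) * C (l + 2) j)) *
        (∑ i ∈ Finset.range (s - l - 1),
          C (s - l - 2) i * C (s - l) (i + 1) * (C (s - l - 2) ((i : ℤ) - 1) - C (s - l - 2) i)))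

lemma C_neg {n : ℕ} {m : ℤ} (h : m < 0) : C n m = 0 := by
  simp [C, not_le.2 h]

lemma C_big {n m : ℕ} (h : n < m) : C n (m : ℤ) = 0 := by
  simp [C, Nat.choose_eq_zero_of_lt h]

lemma C_symm_s16 {n a b : ℕ} (h : a + b = n) : C n (a : ℤ) = C n (b : ℤ) := by
  simp only [C, Int.toNat_natCast, if_pos (Int.natCast_nonneg _)]
  norm_cast
  rw [show a = n - b by omega, Nat.choose_symm (by omega)]

lemma lemA (l : ℕ) :
    (∑ j ∈ Finset.range (l + 1),
        C l j * (C l (j + 1) * C (l + 2) (j + 2) - C l j * C (l + 2) (j + 1)))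
      = ∑ i ∈ Finset.range (l + 1),
          C l i * C (l + 2) (i + 1) * (C l ((i : ℤ) - 1) - C l i) := by
  simp only [mul_sub, Finset.sum_sub_distrib]
  congr 1
  · rw [Finset.sum_range_succ, Finset.sum_range_succ']
    rw [show C l ((l:ℤ) + 1) = 0 from by
      rw [show ((l:ℤ) + 1) = ((l + 1 : ℕ) : ℤ) by push_cast; ring]
      exact C_big (by omega)]
    have h0 : C l ((0:ℕ) : ℤ) * C (l + 2) ((0:ℕ) + 1) * C l (((0:ℕ) : ℤ) - 1) = 0 := by
      rw [show C l (((0:ℕ) : ℤ) - 1) = 0 from C_neg (by norm_num)]; ring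
    rw [h0]
    simp only [mul_zero, zero_mul, add_zero]
    refine Finset.sum_congr rfl fun i _ => ?_
    push_cast
    ring_nf
  · exact Finset.sum_congr rfl fun i _ => by ring

lemma lemB (k : ℕ) :
    (∑ i ∈ Finset.range (k + 3),
        C (k + 2) i * C k ((i : ℤ) - 1) * (C (k + 2) (i + 1) - C (k + 2) i))
      = ∑ j ∈ Finset.Icc 1 (k + 2),
          C (k + 2) j * (C k ((j : ℤ) - 2) * C (k + 2) ((j : ℤ) - 1) -
            C k ((j : ℤ) - 1) * C (k + 2) j) := by
  rw [← Finset.Ico_add_one_right_eq_Icc, Finset.sum_Ico_eq_sum_range]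
  simp only [show k + 2 + 1 - 1 = k + 2 from rfl]
  rw [Finset.sum_range_succ (n := k + 2)]
  rw [show C k (((k + 2 : ℕ) : ℤ) - 1) = 0 from by
    rw [show (((k + 2 : ℕ) : ℤ) - 1) = ((k + 1 : ℕ) : ℤ) by push_cast; ring]
    exact C_big (by omega)]
  simp only [mul_zero, zero_mul, add_zero]
  simp only [mul_sub, Finset.sum_sub_distrib]
  congr 1
  · refine Finset.sum_congr rfl fun i _ => ?_
    push_cast
    ring_nf
  · rw [Finset.sum_range_succ' (n := k + 1)]
    have h0 : C (k + 2) ((0:ℕ) : ℤ) * C k (((0:ℕ) : ℤ) - 1) * C (k + 2) ((0:ℕ) : ℤ) = 0 := by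
      rw [show C k (((0:ℕ) : ℤ) - 1) = 0 from C_neg (by norm_num)]; ring
    rw [h0, add_zero]
    rw [Finset.sum_range_succ (n := k + 1)]
    rw [show C k (((1 + (k + 1) : ℕ) : ℤ) - 1) = 0 from by
      rw [show ((1 + (k + 1) : ℕ) : ℤ) - 1 = ((k + 1 : ℕ) : ℤ) by push_cast; ring]
      exact C_big (by omega)]
    simp only [mul_zero, zero_mul, add_zero]
    refine Finset.sum_congr rfl fun i _ => ?_
    push_cast
    ring_nf

/-- For every integer `s ≥ 2`, `A₃(s) = A₆(s)`. -/
theorem stmt16 (s : ℕ) (hs : 2 ≤ s) : A3 s = A6 s := by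
  unfold A3 A6
  rw [← Finset.sum_range_reflect]
  refine Finset.sum_congr rfl fun l hl => ?_
  simp only [Finset.mem_range] at hl
  obtain ⟨k, hk⟩ : ∃ k, s = l + 2 + k := ⟨s - l - 2, by omega⟩
  subst hk
  have e1 : l + 2 + k - 1 - 1 - l = k := by omega
  have e2 : l + 2 + k - k + 1 = l + 3 := by omega
  have e3 : l + 2 + k - k - 2 = l := by omega
  have e4 : l + 2 + k - k = l + 2 := by omega
  have e5 : l + 2 + k - l - 1 = k + 1 := by omega
  have e6 : l + 2 + k - l - 2 = k := by omega
  have e7 : l + 2 + k - l = k + 2 := by omega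
  rw [e1, e2, e3, e4, e5, e6, e7]
  rw [lemA k, lemB l]
  rw [show C (l + 2 + k) ((k : ℤ) + 2) = C (l + 2 + k) (l : ℤ) from by
    rw [show ((k : ℤ) + 2) = ((k + 2 : ℕ) : ℤ) by push_cast; ring]
    exact C_symm_s16 (by omega)]
  rw [show C (l + 2 + k) ((l : ℤ) + 2) = C (l + 2 + k) (k : ℤ) from by
    rw [show ((l : ℤ) + 2) = ((l + 2 : ℕ) : ℤ) by push_cast; ring]
    exact C_symm_s16 (by omega)]
  ring
end
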